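/- arXiv:math/0402255 — 2 statements merged into one kernel-verified Lean document; each statement's English description precedes it below -/
import Mathlib

section
/- Let K be a nonempty convex compact subset of a Hausdorff locally convex topological vector space and let F be an abelian semigroup of continuous affine maps K → K. If p ∈ K belongs to f(K) for every f ∈ co(F), then p is a common fixed point: f(p) = p for all f ∈ F. -/
/-!
The Cesàro means `Aₙ = (1/(n+1)) ∑_{i ≤ n} f^i` lie in `co(F)`, so `p = Aₙ xₙ` for some `xₙ ∈ K`.
Since `f` is affine the sum telescopes: `f p - p = (1/(n+1)) (f^{n+1} xₙ - xₙ) ∈ (1/(n+1)) (K - K)`.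
The compact set `K - K` is bounded, so these sets shrink into every neighbourhood of `0`, and
`f p - p = 0` because the space is Hausdorff.
-/

open Finset

def AffOn {X : Type*} [AddCommGroup X] [Module ℝ X] (K : Set X) (f : K → K) : Prop :=
  ∀ (x y : K) (t : ℝ), 0 ≤ t → t ≤ 1 →
    ∀ h : t • (x : X) + (1 - t) • (y : X) ∈ K,
      (f ⟨_, h⟩ : X) = t • (f x : X) + (1 - t) • (f y : X)

def Co {X : Type*} [AddCommGroup X] [Module ℝ X] (K : Set X) (F : Set (K → K)) :
    Set (K → K) :=
  {f | ∃ (n : ℕ) (α : Fin n → ℝ) (g : Fin n → (K → K)),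
      (∀ i, g i ∈ F) ∧ (∀ i, 0 ≤ α i) ∧ (∑ i, α i) = 1 ∧
      ∀ x, (f x : X) = ∑ i, α i • ((g i) x : X)}

open scoped Pointwise

theorem Bornology.IsVonNBounded.eq_zero_of_forall_eq_smul {𝕜 E ι : Type*} [NormedField 𝕜]
    [AddCommGroup E] [Module 𝕜 E] [TopologicalSpace E] [T1Space E] {S : Set E}
    (hS : IsVonNBounded 𝕜 S) {l : Filter ι} [l.NeBot] {ε : ι → 𝕜}
    (hε : Filter.Tendsto ε l (nhds 0)) {v : E} (hv : ∀ i, ∃ s ∈ S, v = ε i • s) : v = 0 := by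
  choose s hsS hvs using hv
  have : Filter.Tendsto (ε • s) l (nhds 0) :=
    hS.smul_tendsto_zero (Filter.Eventually.of_forall hsS) hε
  exact tendsto_const_nhds_iff.1 (this.congr fun i => (hvs i).symm)

theorem iterate_mem_of_comp_mem {α : Type*} {F : Set (α → α)} (hid : id ∈ F)
    (hclosed : ∀ f ∈ F, ∀ g ∈ F, f ∘ g ∈ F) {f : α → α} (hf : f ∈ F) (k : ℕ) : f^[k] ∈ F := by
  induction k with
  | zero => exact hid
  | succ k ih => exact Function.iterate_succ' f k ▸ hclosed f hf _ ih

section Affine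

variable {X : Type*} [AddCommGroup X] [Module ℝ X] {K : Set X} {f : K → K}

theorem AffOn.convex_graph (hK : Convex ℝ K) (hf : AffOn K f) :
    Convex ℝ (Set.range fun x : K => ((x : X), (f x : X))) := by
  rintro _ ⟨x, rfl⟩ _ ⟨y, rfl⟩ a b ha hb hab
  obtain rfl : b = 1 - a := by linarith
  have hmem : a • (x : X) + (1 - a) • (y : X) ∈ K := hK x.2 y.2 ha hb hab
  exact ⟨⟨_, hmem⟩, by simp [hf x y a ha (by linarith) hmem]⟩

theorem AffOn.map_sum (hK : Convex ℝ K) (hf : AffOn K f) {ι : Type*} {s : Finset ι}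
    {w : ι → ℝ} {x : ι → K} (h₀ : ∀ i ∈ s, 0 ≤ w i) (h₁ : ∑ i ∈ s, w i = 1)
    (h : ∑ i ∈ s, w i • (x i : X) ∈ K) :
    (f ⟨_, h⟩ : X) = ∑ i ∈ s, w i • (f (x i) : X) := by
  obtain ⟨y, hy⟩ := (hf.convex_graph hK).sum_mem h₀ h₁ fun i _ => ⟨x i, rfl⟩
  simp only [Prod.ext_iff, Prod.fst_sum, Prod.snd_sum, Prod.smul_fst, Prod.smul_snd] at hy
  obtain rfl : y = ⟨_, h⟩ := Subtype.ext hy.1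
  exact hy.2

theorem sum_const_inv_succ (n : ℕ) : ∑ _i : Fin (n + 1), ((n : ℝ) + 1)⁻¹ = 1 := by
  rw [Finset.sum_const, Finset.card_univ, Fintype.card_fin, nsmul_eq_mul, Nat.cast_succ]
  exact mul_inv_cancel₀ (Nat.cast_add_one_ne_zero n)

noncomputable def cesaroMean (hK : Convex ℝ K) (f : K → K) (n : ℕ) (x : K) : K :=
  ⟨∑ i : Fin (n + 1), ((n : ℝ) + 1)⁻¹ • (f^[i] x : X),
    hK.sum_mem (fun _ _ => by positivity) (sum_const_inv_succ n) fun i _ => (f^[i] x).2⟩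

theorem cesaroMean_mem_co (hK : Convex ℝ K) {F : Set (K → K)} (hid : id ∈ F)
    (hclosed : ∀ f ∈ F, ∀ g ∈ F, f ∘ g ∈ F) (hf : f ∈ F) (n : ℕ) : cesaroMean hK f n ∈ Co K F :=
  ⟨n + 1, fun _ => ((n : ℝ) + 1)⁻¹, fun i => f^[i],
    fun _ => iterate_mem_of_comp_mem hid hclosed hf _, fun _ => by positivity,
    sum_const_inv_succ n, fun _ => rfl⟩

theorem AffOn.apply_cesaroMean_sub (hK : Convex ℝ K) (hf : AffOn K f) (n : ℕ) (x : K) :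
    (f (cesaroMean hK f n x) : X) - cesaroMean hK f n x =
      ((n : ℝ) + 1)⁻¹ • ((f^[n + 1] x : X) - x) := by
  rw [cesaroMean, hf.map_sum hK (fun _ _ => by positivity) (sum_const_inv_succ n),
    ← Finset.sum_sub_distrib]
  simp only [← smul_sub, ← Finset.smul_sum, ← Function.iterate_succ_apply' f]
  congr 1
  exact (Fin.sum_univ_eq_sum_range (fun i => (f^[i + 1] x : X) - f^[i] x) (n + 1)).trans
    (Finset.sum_range_sub (fun i => (f^[i] x : X)) (n + 1))

end Affine

theorem stmt6_general {X : Type*} [AddCommGroup X] [Module ℝ X] [TopologicalSpace X]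
    [IsTopologicalAddGroup X] [ContinuousSMul ℝ X] [T2Space X]
    (K : Set X) (hconv : Convex ℝ K) (hcomp : IsCompact K)
    (F : Set (K → K)) (hid : id ∈ F)
    (hF : ∀ f ∈ F, Continuous f ∧ AffOn K f)
    (hclosed : ∀ f ∈ F, ∀ g ∈ F, f ∘ g ∈ F)
    (p : K) (hp : ∀ f ∈ Co K F, p ∈ Set.range f) :
    ∀ f ∈ F, f p = p := by
  intro f hf
  have hbdd : Bornology.IsVonNBounded ℝ (K - K) := by
    simpa only [sub_eq_add_neg] using (hcomp.add hcomp.neg).isVonNBounded ℝ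
  refine Subtype.ext <| sub_eq_zero.1 <|
    hbdd.eq_zero_of_forall_eq_smul tendsto_one_div_add_atTop_nhds_zero_nat fun n => ?_
  obtain ⟨x, rfl⟩ := hp _ (cesaroMean_mem_co hconv hid hclosed hf n)
  refine ⟨_, Set.sub_mem_sub (f^[n + 1] x).2 x.2, ?_⟩
  rw [(hF f hf).2.apply_cesaroMean_sub, one_div]

theorem stmt6 {X : Type*} [AddCommGroup X] [Module ℝ X] [TopologicalSpace X]
    [IsTopologicalAddGroup X] [ContinuousSMul ℝ X] [T2Space X] [LocallyConvexSpace ℝ X]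
    (K : Set X) (hne : K.Nonempty) (hconv : Convex ℝ K) (hcomp : IsCompact K)
    (F : Set (K → K)) (hid : id ∈ F)
    (hF : ∀ f ∈ F, Continuous f ∧ AffOn K f)
    (hclosed : ∀ f ∈ F, ∀ g ∈ F, f ∘ g ∈ F)
    (habel : ∀ f ∈ F, ∀ g ∈ F, f ∘ g = g ∘ f)
    (p : K) (hp : ∀ f ∈ Co K F, p ∈ Set.range f) :
    ∀ f ∈ F, f p = p :=
  stmt6_general K hconv hcomp F hid hF hclosed p hp
end

section
/- Let K be a nonempty convex compact subset of a Hausdorff locally convex topological vector space. Suppose H is an abelian semigroup of continuous affine self-maps of K and g : K → K is a single continuous affine map such that for every h ∈ H there is h′ ∈ H with h ∘ g = g ∘ h′. Then the semigroup generated by H ∪ {g} has a common fixed point in K. -/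
open Function Set Filter Topology

section Averages

variable {X : Type*} [AddCommGroup X] [Module ℝ X] {K : Set X}

lemma cesaroWeight_nonneg (n : ℕ) : (0 : ℝ) ≤ ((n : ℝ) + 2)⁻¹ := by positivity

lemma cesaroWeight_le_one (n : ℕ) : ((n : ℝ) + 2)⁻¹ ≤ 1 :=
  inv_le_one_of_one_le₀ (by linarith [n.cast_nonneg (α := ℝ)])

lemma Convex.cesaroStep_mem {C : Set X} (hC : Convex ℝ C) {x y : X} (hx : x ∈ C) (hy : y ∈ C)
    (n : ℕ) : ((n : ℝ) + 2)⁻¹ • x + (1 - ((n : ℝ) + 2)⁻¹) • y ∈ C :=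
  hC hx hy (cesaroWeight_nonneg n) (sub_nonneg.2 (cesaroWeight_le_one n)) (add_sub_cancel _ _)

/-- The average of `x, f x, …, f^[n] x` (see `cesaroAvg_smul_eq_sum`), defined by a two-point
recursion so that it lies in `K` by convexity alone. -/
noncomputable def cesaroAvg (hK : Convex ℝ K) (f : K → K) : ℕ → K → K
  | 0, x => x
  | n + 1, x => ⟨_, hK.cesaroStep_mem x.2 (f (cesaroAvg hK f n x)).2 n⟩

variable (hK : Convex ℝ K) {f : K → K}

lemma cesaroAvg_succ (n : ℕ) (x : K) :
    cesaroAvg hK f (n + 1) x = ⟨_, hK.cesaroStep_mem x.2 (f (cesaroAvg hK f n x)).2 n⟩ :=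
  rfl

lemma cesaroAvg_mem {S : Set K} (hS : Convex ℝ (((↑) : K → X) '' S)) (hf : MapsTo f S S)
    {x : K} (hx : x ∈ S) : ∀ n, cesaroAvg hK f n x ∈ S
  | 0 => hx
  | n + 1 => by
    obtain ⟨y, hyS, hy⟩ := hS (mem_image_of_mem _ hx)
      (mem_image_of_mem _ (hf (cesaroAvg_mem hS hf hx n))) (cesaroWeight_nonneg n)
      (sub_nonneg.2 (cesaroWeight_le_one n)) (add_sub_cancel _ _)
    exact (Subtype.ext hy : y = cesaroAvg hK f (n + 1) x) ▸ hyS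

lemma Function.Commute.cesaroAvg_right {u : K → K} (hu : AffOn K u)
    (huf : Function.Commute u f) :
    ∀ n, Function.Commute u (cesaroAvg hK f n)
  | 0 => fun _ => rfl
  | n + 1 => fun x => Subtype.ext <| by
    rw [cesaroAvg_succ, hu _ _ _ (cesaroWeight_nonneg n) (cesaroWeight_le_one n),
      cesaroAvg_succ, huf.eq, (huf.cesaroAvg_right hu n).eq x]

lemma cesaroAvg_smul_eq_sum (hf : AffOn K f) :
    ∀ (n : ℕ) x,
      ((n : ℝ) + 1) • (cesaroAvg hK f n x : X) = ∑ k ∈ Finset.range (n + 1), (f^[k] x : X)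
  | 0, x => by simp [cesaroAvg]
  | n + 1, x => by
    rw [Finset.sum_range_succ']
    simp only [iterate_succ_apply]
    rw [← cesaroAvg_smul_eq_sum hf n (f x),
      ← ((Function.Commute.refl f).cesaroAvg_right hK hf n).eq, cesaroAvg_succ, iterate_zero_apply]
    push_cast
    match_scalars <;> field_simp <;> ring

lemma cesaroAvg_displacement (hf : AffOn K f) (n : ℕ) (x : K) :
    (f (cesaroAvg hK f n x) : X) - cesaroAvg hK f n x =
      ((n : ℝ) + 1)⁻¹ • ((f^[n + 1] x : X) - x) := by
  rw [eq_inv_smul_iff₀ (by positivity), smul_sub,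
    ((Function.Commute.refl f).cesaroAvg_right hK hf n).eq, cesaroAvg_smul_eq_sum hK hf,
    cesaroAvg_smul_eq_sum hK hf]
  simpa [Finset.sum_sub_distrib, iterate_succ_apply] using
    Finset.sum_range_sub (fun k => (f^[k] x : X)) (n + 1)

end Averages

lemma convex_image_biInter_fixedPoints {X : Type*} [AddCommGroup X] [Module ℝ X] {K : Set X}
    (hK : Convex ℝ K) {F : Set (K → K)} (hF : ∀ f ∈ F, AffOn K f) :
    Convex ℝ (((↑) : K → X) '' ⋂ f ∈ F, fixedPoints f) := by
  rintro _ ⟨x, hx, rfl⟩ _ ⟨y, hy, rfl⟩ a b ha hb hab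
  obtain rfl : b = 1 - a := by linarith
  refine ⟨⟨_, hK x.2 y.2 ha hb hab⟩, mem_iInter₂.2 fun f hf => Subtype.ext ?_, rfl⟩
  rw [hF f hf x y a ha (by linarith), (mem_iInter₂.1 hx f hf).eq, (mem_iInter₂.1 hy f hf).eq]

lemma mapsTo_biInter_fixedPoints {α : Type*} {F : Set (α → α)} {g : α → α}
    (hg : ∀ f ∈ F, ∃ f' ∈ F, Semiconj g f' f) :
    MapsTo g (⋂ f ∈ F, fixedPoints f) (⋂ f ∈ F, fixedPoints f) := fun _ hx =>
  mem_iInter₂.2 fun f hf =>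
    let ⟨f', hf', hgf⟩ := hg f hf
    hgf.mapsTo_fixedPoints (mem_iInter₂.1 hx f' hf')

section FixedPoints

variable {X : Type*} [AddCommGroup X] [Module ℝ X] [TopologicalSpace X]
  [IsTopologicalAddGroup X] [ContinuousSMul ℝ X] {K : Set X}

lemma tendsto_cesaroAvg_displacement (hK : Convex ℝ K) {f : K → K} (hf : AffOn K f)
    {S : Set K} (hS : IsCompact S) (hfS : MapsTo f S S) {x : K} (hx : x ∈ S) :
    Tendsto (fun n => (f (cesaroAvg hK f n x) : X) - cesaroAvg hK f n x) atTop (𝓝 0) := by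
  have hbdd : Bornology.IsVonNBounded ℝ ((· - (x : X)) '' (((↑) : K → X) '' S)) :=
    ((hS.image continuous_subtype_val).image (continuous_sub_right _)).isVonNBounded ℝ
  simp_rw [cesaroAvg_displacement hK hf]
  refine hbdd.smul_tendsto_zero (.of_forall fun n => ?_) ?_
  · exact mem_image_of_mem _ (mem_image_of_mem _ (hfS.iterate (n + 1) hx))
  · simpa using tendsto_one_div_add_atTop_nhds_zero_nat (𝕜 := ℝ)

theorem AffOn.exists_isFixedPt_of_mapsTo [T2Space X] (hK : Convex ℝ K) {f : K → K}
    (hfc : Continuous f) (hf : AffOn K f) {S : Set K} (hS : IsCompact S)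
    (hSconv : Convex ℝ (((↑) : K → X) '' S)) (hSne : S.Nonempty) (hfS : MapsTo f S S) : ∃ p ∈ S, IsFixedPt f p := by
  obtain ⟨x, hx⟩ := hSne
  obtain ⟨p, hpS, hp⟩ := hS.exists_mapClusterPt (f := atTop) (u := fun n => cesaroAvg hK f n x)
    (tendsto_principal.2 (.of_forall (cesaroAvg_mem hK hSconv hfS hx)))
  have hdisp : MapClusterPt ((f p : X) - p) atTop
      (fun n => (f (cesaroAvg hK f n x) : X) - cesaroAvg hK f n x) :=
    ((continuous_subtype_val.comp hfc).sub continuous_subtype_val).continuousAt.mapClusterPt hp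
  have h0 : (f p : X) - p = 0 := eq_of_nhds_neBot <|
    hdisp.neBot.mono (inf_le_inf_left _ (tendsto_cesaroAvg_displacement hK hf hS hfS hx))
  exact ⟨p, hpS, Subtype.ext (sub_eq_zero.1 h0)⟩

end FixedPoints

section MarkovKakutani

variable {X : Type*} [AddCommGroup X] [Module ℝ X] [TopologicalSpace X]
  [IsTopologicalAddGroup X] [ContinuousSMul ℝ X] [T2Space X] {K : Set X}

theorem exists_forall_isFixedPt_of_finite (hK : Convex ℝ K) {F : Set (K → K)} (hFfin : F.Finite)
    (hFc : ∀ f ∈ F, Continuous f) (hFa : ∀ f ∈ F, AffOn K f)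
    (hFcomm : ∀ f ∈ F, ∀ g ∈ F, Function.Commute f g) {S : Set K} (hS : IsCompact S)
    (hSconv : Convex ℝ (((↑) : K → X) '' S)) (hSne : S.Nonempty) (hFS : ∀ f ∈ F, MapsTo f S S) :
    ∃ p ∈ S, ∀ f ∈ F, IsFixedPt f p := by
  induction F, hFfin using Set.Finite.induction_on generalizing S with
  | empty =>
    obtain ⟨p, hp⟩ := hSne
    exact ⟨p, hp, by simp⟩
  | @insert f F _ _ ih =>
    simp only [mem_insert_iff, forall_eq_or_imp] at hFc hFa hFcomm hFS ⊢
    have hfix : (S ∩ fixedPoints f).Nonempty :=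
      hFa.1.exists_isFixedPt_of_mapsTo hK hFc.1 hS hSconv hSne hFS.1
    have hconv : Convex ℝ (((↑) : K → X) '' (S ∩ fixedPoints f)) := by
      rw [image_inter Subtype.val_injective]
      refine hSconv.inter ?_
      simpa using convex_image_biInter_fixedPoints hK (F := {f}) (by simpa using hFa.1)
    obtain ⟨p, ⟨hpS, hpf⟩, hpF⟩ := ih hFc.2 hFa.2 (fun g hg h hh => (hFcomm.2 g hg).2 h hh)
      (hS.inter_right (isClosed_fixedPoints hFc.1)) hconv hfix
      (fun g hg => (hFS.2 g hg).inter_inter ((hFcomm.2 g hg).1.mapsTo_fixedPoints))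
    exact ⟨p, hpS, hpf, hpF⟩

theorem exists_forall_isFixedPt (hK : Convex ℝ K) {F : Set (K → K)}
    (hFc : ∀ f ∈ F, Continuous f) (hFa : ∀ f ∈ F, AffOn K f)
    (hFcomm : ∀ f ∈ F, ∀ g ∈ F, Function.Commute f g) {S : Set K} (hS : IsCompact S)
    (hSconv : Convex ℝ (((↑) : K → X) '' S)) (hSne : S.Nonempty) (hFS : ∀ f ∈ F, MapsTo f S S) :
    ∃ p ∈ S, ∀ f ∈ F, IsFixedPt f p := by
  have := hS.inter_iInter_nonempty (fun f : F => fixedPoints f.1)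
    (fun f => isClosed_fixedPoints (hFc f.1 f.2)) fun u => ?_
  · obtain ⟨p, hpS, hp⟩ := this
    exact ⟨p, hpS, fun f hf => mem_iInter.1 hp ⟨f, hf⟩⟩
  have hu : Subtype.val '' (u : Set F) ⊆ F := Subtype.coe_image_subset F u
  obtain ⟨p, hpS, hp⟩ := exists_forall_isFixedPt_of_finite hK (u.finite_toSet.image Subtype.val)
    (fun f hf => hFc f (hu hf)) (fun f hf => hFa f (hu hf))
    (fun f hf g hg => hFcomm f (hu hf) g (hu hg)) hS hSconv hSne (fun f hf => hFS f (hu hf))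
  exact ⟨p, hpS, mem_iInter₂.2 fun f hf => hp f (mem_image_of_mem _ hf)⟩

end MarkovKakutani

theorem stmt17_general {X : Type*} [AddCommGroup X] [Module ℝ X] [TopologicalSpace X]
    [IsTopologicalAddGroup X] [ContinuousSMul ℝ X] [T2Space X]
    (K : Set X) (hne : K.Nonempty) (hconv : Convex ℝ K) (hcomp : IsCompact K)
    (H : Set (Function.End K)) (g : Function.End K)
    (hH : ∀ f ∈ H, Continuous (f : K → K) ∧ AffOn K (f : K → K))
    (hg : Continuous (g : K → K) ∧ AffOn K (g : K → K))
    (hHabel : ∀ f ∈ H, ∀ f' ∈ H, f * f' = f' * f)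
    (hnormal : ∀ h ∈ H, ∃ h' ∈ H, h * g = g * h') :
    ∃ p : K, ∀ f ∈ Subsemigroup.closure (H ∪ {g}), (f : K → K) p = p := by
  have : CompactSpace K := isCompact_iff_compactSpace.1 hcomp
  let T : Set K := ⋂ h ∈ H, fixedPoints h
  have hTne : T.Nonempty := by
    obtain ⟨p, -, hp⟩ := exists_forall_isFixedPt (F := H) hconv (fun f hf => (hH f hf).1)
      (fun f hf => (hH f hf).2) (fun f hf f' hf' => congrFun (hHabel f hf f' hf')) isCompact_univ
      (by simpa using hconv) (have := hne.to_subtype; univ_nonempty) (fun f _ => mapsTo_univ f _)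
    exact ⟨p, mem_iInter₂.2 hp⟩
  obtain ⟨p, hpT, hpg⟩ := hg.2.exists_isFixedPt_of_mapsTo hconv hg.1
    (isClosed_biInter fun h hh => isClosed_fixedPoints (hH h hh).1).isCompact
    (convex_image_biInter_fixedPoints hconv fun h hh => (hH h hh).2) hTne
    (mapsTo_biInter_fixedPoints fun h hh => (hnormal h hh).imp fun h' ⟨hh', hgh⟩ =>
      ⟨hh', fun x => (congrFun hgh x).symm⟩)
  refine ⟨p, fun f hf => ?_⟩
  have hsub : H ∪ {g} ⊆ (MulAction.stabilizerSubmonoid (Function.End K) p).toSubsemigroup :=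
    union_subset (fun h hh => mem_iInter₂.1 hpT h hh) (singleton_subset_iff.2 hpg)
  exact Subsemigroup.closure_le.2 hsub hf

theorem stmt17 {X : Type*} [AddCommGroup X] [Module ℝ X] [TopologicalSpace X]
    [IsTopologicalAddGroup X] [ContinuousSMul ℝ X] [T2Space X] [LocallyConvexSpace ℝ X]
    (K : Set X) (hne : K.Nonempty) (hconv : Convex ℝ K) (hcomp : IsCompact K)
    (H : Set (Function.End K)) (g : Function.End K)
    (hH : ∀ f ∈ H, Continuous (f : K → K) ∧ AffOn K (f : K → K))
    (hg : Continuous (g : K → K) ∧ AffOn K (g : K → K))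
    (hHclosed : ∀ f ∈ H, ∀ f' ∈ H, f * f' ∈ H)
    (hHabel : ∀ f ∈ H, ∀ f' ∈ H, f * f' = f' * f)
    (hnormal : ∀ h ∈ H, ∃ h' ∈ H, h * g = g * h') :
    ∃ p : K, ∀ f ∈ Subsemigroup.closure (H ∪ {g}), (f : K → K) p = p :=
  stmt17_general K hne hconv hcomp H g hH hg hHabel hnormal
end
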